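/- Let K be a p-core CRG for some p ∈ (0,1/2], with fully supported optimizer μ. Then for every vertex u of K, the weighted gray-degree satisfies d_G(u) ≤ 1 − μ(u), where d_G(u) = Σ_{v: uv gray} μ(v). Consequently, for a black vertex u (using the identity d_G(u) = (p − g)/p + ((1−2p)/p)μ(u) with g = g_K(p)), one obtains μ(u) ≤ g/(1−p). -/

import Mathlib

open Finset

inductive EColor | white | black | gray
deriving DecidableEq

/-- The `p`-weight of an edge color: `p` for white, `1-p` for black, `0` for gray. -/
def wval (p : ℝ) : EColor → ℝ
  | .white => p
  | .black => 1 - p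
  | .gray => 0

/-- The matrix `M_K(p)` of a CRG given by vertex colors `vb` (`true` = black)
and edge colors `ec`. -/
def Mmat {V : Type*} [DecidableEq V] (vb : V → Bool) (ec : V → V → EColor) (p : ℝ)
    (x y : V) : ℝ :=
  if x = y then (if vb x then 1 - p else p) else wval p (ec x y)

/-- `μ` is a probability mass. -/
def IsProb {V : Type*} [Fintype V] (μ : V → ℝ) : Prop :=
  (∀ x, 0 ≤ μ x) ∧ ∑ x, μ x = 1

/-- The quadratic form `⟨μ, M_K(p) μ⟩`. -/
def QF {V : Type*} [Fintype V] [DecidableEq V] (vb : V → Bool) (ec : V → V → EColor)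
    (p : ℝ) (μ : V → ℝ) : ℝ :=
  ∑ x, ∑ y, μ x * Mmat vb ec p x y * μ y

/-- `g` is the minimum of the quadratic form over probability masses, i.e. `g = g_K(p)`. -/
def gIs {V : Type*} [Fintype V] [DecidableEq V] (vb : V → Bool) (ec : V → V → EColor)
    (p g : ℝ) : Prop :=
  IsLeast {t | ∃ μ : V → ℝ, IsProb μ ∧ t = QF vb ec p μ} g

/-- The weighted gray-degree `d_G(u) = ∑_{v : uv gray} μ(v)`. -/
def grayDeg {V : Type*} [Fintype V] [DecidableEq V] (ec : V → V → EColor) (μ : V → ℝ)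
    (u : V) : ℝ :=
  ∑ v ∈ Finset.univ.filter (fun v => v ≠ u ∧ ec u v = EColor.gray), μ v

theorem IsProb.sum_filter_ne_le_one_sub {V : Type*} [Fintype V] [DecidableEq V] {μ : V → ℝ}
    (hμ : IsProb μ) (u : V) (P : V → Prop) [DecidablePred P] :
    ∑ v ∈ univ.filter (fun v => v ≠ u ∧ P v), μ v ≤ 1 - μ u := by
  have hsub : ∑ v ∈ univ.filter (fun v => v ≠ u ∧ P v), μ v ≤ ∑ v ∈ univ.erase u, μ v :=
    sum_le_sum_of_subset_of_nonneg (fun v hv => by simp_all) fun v _ _ => hμ.1 v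
  have hsplit : μ u + ∑ v ∈ univ.erase u, μ v = 1 := by
    rw [add_sum_erase _ _ (mem_univ u), hμ.2]
  linarith

theorem grayDeg_le_one_sub {V : Type*} [Fintype V] [DecidableEq V] (ec : V → V → EColor)
    {μ : V → ℝ} (hμ : IsProb μ) (u : V) : grayDeg ec μ u ≤ 1 - μ u :=
  hμ.sum_filter_ne_le_one_sub u (ec u · = EColor.gray)

theorem le_div_one_sub_of_stationary_le {p g m : ℝ} (hp0 : 0 < p) (hp1 : p < 1)
    (h : (p - g) / p + ((1 - 2 * p) / p) * m ≤ 1 - m) : m ≤ g / (1 - p) := by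
  have h' : p - g + (1 - 2 * p) * m ≤ p * (1 - m) := by
    have := mul_le_mul_of_nonneg_left h hp0.le
    rwa [mul_add, mul_div_cancel₀ _ hp0.ne', ← mul_assoc, mul_div_cancel₀ _ hp0.ne'] at this
  rw [le_div_iff₀ (by linarith)]
  linarith

theorem stmt19_general {V : Type*} [Fintype V] [DecidableEq V]
    (vb : V → Bool) (ec : V → V → EColor) (p g : ℝ) (hp0 : 0 < p) (hp2 : p ≤ 1 / 2)
    (μ : V → ℝ) (hμ : IsProb μ)
    (hblack : ∀ u, vb u = true →
      grayDeg ec μ u = (p - g) / p + ((1 - 2 * p) / p) * μ u) :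
    (∀ u, grayDeg ec μ u ≤ 1 - μ u) ∧
    (∀ u, vb u = true → μ u ≤ g / (1 - p)) :=
  ⟨grayDeg_le_one_sub ec hμ, fun u hu =>
    le_div_one_sub_of_stationary_le hp0 (by linarith) (hblack u hu ▸ grayDeg_le_one_sub ec hμ u)⟩

/-- for `p ∈ (0,1/2]` and a `p`-core CRG with fully supported optimizer `μ`,
every vertex `u` satisfies `d_G(u) ≤ 1 − μ(u)`; consequently every black vertex `u`
(satisfying the gray-degree identity) has `μ(u) ≤ g/(1−p)`. -/
theorem stmt19 {V : Type*} [Fintype V] [DecidableEq V]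
    (vb : V → Bool) (ec : V → V → EColor) (p g : ℝ) (hp0 : 0 < p) (hp2 : p ≤ 1 / 2)
    (hsymm : ∀ a b, ec a b = ec b a)
    (hnb : ∀ x y, x ≠ y → ec x y ≠ EColor.black)
    (hwe : ∀ x y, x ≠ y → ec x y = EColor.white → vb x = true ∧ vb y = true)
    (μ : V → ℝ) (hμ : IsProb μ) (hfull : ∀ x, 0 < μ x)
    (hg : gIs vb ec p g) (hμg : QF vb ec p μ = g)
    (hblack : ∀ u, vb u = true →
      grayDeg ec μ u = (p - g) / p + ((1 - 2 * p) / p) * μ u) :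
    (∀ u, grayDeg ec μ u ≤ 1 - μ u) ∧
    (∀ u, vb u = true → μ u ≤ g / (1 - p)) :=
  stmt19_general vb ec p g hp0 hp2 μ hμ hblack
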